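/- arXiv:1208.1627 — 2 statements merged into one kernel-verified Lean document; each statement's English description precedes it below -/
import Mathlib

section
/- Let q be an odd power of a prime, let F be the finite field with q² elements, let a, c ∈ F with a ≠ 0 and c^q + c = 0, and set Δ = 1 − 4·a^(q+1) (note Δ^q = Δ, so Δ lies in the subfield F_q). Let I be the cardinality of {(x,y) ∈ F×F : x^(q+1) = y^q + y and y = a·x² + c}. Then: if Δ = 0 then I = q; if Δ ≠ 0 and Δ is a square in F_q (i.e. there is z with z^q = z and z² = Δ) then I = 1; and if Δ is a non-square in F_q then I = 2q − 1. -/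
/-!
Since `c` has trace zero, a point of the intersection is determined by its abscissa `x`, subject
to `x ^ (q + 1) = a ^ q * x ^ (2 * q) + a * x ^ 2`. For `x ≠ 0` put `u = x ^ (q - 1)`: the
equation becomes `a ^ q * u ^ 2 - u + a = 0`, whose roots are `u± = (1 ± w) / (2 * a ^ q)` with
`w ^ 2 = Δ`. As `Fˣ` is cyclic of order `(q - 1) * (q + 1)`, a unit `u` has `q - 1` preimages
under `x ↦ x ^ (q - 1)` if its norm `u ^ (q + 1)` is `1`, and none otherwise; here
`u± ^ (q + 1) = (1 ± w ^ q) * (1 ± w) / (1 - w ^ 2)`. Since `Δ ^ q = Δ`, `w ^ q = ± w`: for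
`w ^ q = -w` (which includes `w = 0`, where `u+ = u-`) both norms are `1`, while for
`w ^ q = w ≠ 0` neither is.
-/

theorem Set.ncard_setOf_or_of_ne {α β : Type*} [Finite α] {f : α → β} {u v : β}
    (h : u ≠ v) :
    {x | f x = u ∨ f x = v}.ncard = {x | f x = u}.ncard + {x | f x = v}.ncard := by
  rw [Set.ofPred_or, Set.ncard_union_eq]
  exact Set.disjoint_left.mpr fun x hu hv => h (hu.symm.trans hv)

theorem IsCyclic.range_powMonoidHom_eq_ker {G : Type*} [CommGroup G] [IsCyclic G] [Finite G]
    {n m : ℕ} (h : Nat.card G = n * m) :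
    (powMonoidHom n : G →* G).range = (powMonoidHom m : G →* G).ker := by
  refine Subgroup.eq_of_le_of_card_ge ?_ ?_
  · rintro _ ⟨x, rfl⟩
    simp [← pow_mul, ← h, pow_card_eq_one']
  · have hn : n ≠ 0 := by rintro rfl; simp [Nat.card_pos.ne'] at h
    rw [IsCyclic.card_powMonoidHom_range, IsCyclic.card_powMonoidHom_ker, h,
      Nat.gcd_mul_right_left, Nat.gcd_mul_left_left, Nat.mul_div_cancel_left _ hn.bot_lt]

theorem IsCyclic.ncard_pow_eq {G : Type*} [CommGroup G] [IsCyclic G] [Finite G]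
    {n m : ℕ} (h : Nat.card G = n * m) {u : G} (hu : u ^ m = 1) :
    {x : G | x ^ n = u}.ncard = n := by
  obtain ⟨y, rfl⟩ : u ∈ (powMonoidHom n : G →* G).range := by
    rwa [range_powMonoidHom_eq_ker h]
  calc {x : G | x ^ n = y ^ n}.ncard
      = Nat.card ((powMonoidHom n : G →* G) ⁻¹' {powMonoidHom n y}) := rfl
    _ = Nat.card (powMonoidHom n : G →* G).ker := Nat.card_congr (MonoidHom.fiberEquivKer _ y)
    _ = n := by rw [IsCyclic.card_powMonoidHom_ker, h, Nat.gcd_mul_right_left]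

namespace FiniteField

variable {F : Type*} [Field F] [Fintype F]

theorem exists_ringHom_eq_pow {q : ℕ} (hq : q ∣ Fintype.card F) :
    ∃ φ : F →+* F, ∀ x, φ x = x ^ q := by
  obtain ⟨n, hp, hcard⟩ := FiniteField.card F (ringChar F)
  obtain ⟨k, -, rfl⟩ := (Nat.dvd_prime_pow hp).mp (hcard ▸ hq)
  have : Fact (ringChar F).Prime := ⟨hp⟩
  exact ⟨iterateFrobenius F (ringChar F) k, fun x => iterateFrobenius_def _ _ x⟩

variable {n m : ℕ}

theorem ne_zero_and_ne_zero_of_card_eq (hF : Fintype.card F = n * m + 1) : n ≠ 0 ∧ m ≠ 0 :=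
  mul_ne_zero_iff.mp (by have := Fintype.one_lt_card (α := F); omega)

theorem pow_pow_eq_one (hF : Fintype.card F = n * m + 1) {x : F} (hx : x ≠ 0) :
    (x ^ n) ^ m = 1 := by
  rw [← pow_mul, ← Nat.add_sub_cancel (n * m) 1, ← hF, pow_card_sub_one_eq_one x hx]

theorem ncard_pow_eq (hF : Fintype.card F = n * m + 1) {u : F} (hu : u ^ m = 1) :
    {x : F | x ^ n = u}.ncard = n := by
  classical
  obtain ⟨hn, hm⟩ := ne_zero_and_ne_zero_of_card_eq hF
  have hu0 : u ≠ 0 := by rintro rfl; simp [hm] at hu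
  have hset : {x : F | x ^ n = u} = Units.val '' {x : Fˣ | x ^ n = Units.mk0 u hu0} := by
    ext x
    constructor
    · intro hx
      have hx0 : x ≠ 0 := by rintro rfl; exact hu0 (by rw [← hx, zero_pow hn])
      exact ⟨Units.mk0 x hx0, by ext; simpa using hx, rfl⟩
    · rintro ⟨x, hx, rfl⟩
      simpa using congrArg Units.val hx
  have hcard : Nat.card Fˣ = n * m := by
    rw [Nat.card_eq_fintype_card, Fintype.card_units, hF, Nat.add_sub_cancel]
  rw [hset, Set.ncard_image_of_injective _ Units.val_injective,
    IsCyclic.ncard_pow_eq hcard (by ext; simpa using hu)]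

theorem pow_ne_of_pow_ne_one (hF : Fintype.card F = n * m + 1) {u : F} (hu0 : u ≠ 0)
    (hu : u ^ m ≠ 1) (x : F) : x ^ n ≠ u := by
  rintro rfl
  refine hu (pow_pow_eq_one hF ?_)
  rintro rfl
  exact hu0 (zero_pow (ne_zero_and_ne_zero_of_card_eq hF).1)

theorem card_eq_of_card_eq_sq {q : ℕ} (hF : Fintype.card F = q ^ 2) :
    Fintype.card F = (q - 1) * (q + 1) + 1 := by
  obtain ⟨k, rfl⟩ : ∃ k, q = k + 1 := Nat.exists_eq_add_one.mpr
    (Nat.pos_of_ne_zero (by rintro rfl; simp [Fintype.card_ne_zero] at hF))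
  rw [hF, Nat.add_sub_cancel]
  ring

theorem pow_pow_eq_self_of_card_eq_sq {q : ℕ} (hF : Fintype.card F = q ^ 2) (x : F) :
    (x ^ q) ^ q = x := by
  rw [← pow_mul, ← sq, ← hF, pow_card]

theorem ringChar_ne_two_of_card_eq_sq {q : ℕ} (hF : Fintype.card F = q ^ 2) (hq : Odd q) :
    ringChar F ≠ 2 := by
  rw [Ne, even_card_iff_char_two, hF, ← Nat.even_iff, Nat.not_even_iff_odd]
  exact hq.pow

theorem isSquare_of_pow_eq_self {q : ℕ} (hF : Fintype.card F = q ^ 2) (hq : Odd q) {t : F}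
    (ht : t ^ q = t) : IsSquare t := by
  rcases eq_or_ne t 0 with rfl | ht0
  · exact IsSquare.zero
  obtain ⟨k, rfl⟩ := hq
  have htk : t ^ (2 * k) = 1 := by
    apply mul_right_cancel₀ ht0
    rw [one_mul, ← pow_succ, ht]
  rw [isSquare_iff (ringChar_ne_two_of_card_eq_sq hF ⟨k, rfl⟩) ht0, hF,
    show (2 * k + 1) ^ 2 / 2 = 2 * k * (k + 1) by ring_nf; omega, pow_mul, htk, one_pow]

theorem exists_sq_eq_pow_eq_neg {q : ℕ} (hF : Fintype.card F = q ^ 2) (hq : Odd q) {t : F}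
    (ht : t ^ q = t) (hns : ¬∃ z : F, z ^ q = z ∧ z ^ 2 = t) :
    ∃ w : F, w ^ 2 = t ∧ w ^ q = -w ∧ w ≠ 0 := by
  obtain ⟨w, rfl⟩ := isSquare_of_pow_eq_self hF hq ht
  have hw0 : w ≠ 0 := by
    rintro rfl
    exact hns ⟨0, zero_pow hq.pos.ne', by ring⟩
  have hsq : (w ^ q) ^ 2 = w ^ 2 := by rw [← pow_mul, mul_comm, pow_mul, sq, ht]
  rcases sq_eq_sq_iff_eq_or_eq_neg.mp hsq with hwq | hwq
  · exact absurd ⟨w, hwq, sq w⟩ hns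
  · exact ⟨w, sq w, hwq, hw0⟩

end FiniteField

namespace HermitianParabola

variable {F : Type*} [Field F] {q : ℕ} {a c : F}

theorem disc_pow_eq_self {φ : F →+* F} (hφ : ∀ x, φ x = x ^ q)
    (haq : (a ^ q) ^ q = a) :
    (1 - 4 * a ^ (q + 1)) ^ q = 1 - 4 * a ^ (q + 1) := by
  rw [← hφ, map_sub, map_one, map_mul, map_ofNat, map_pow, hφ, pow_succ, haq]
  ring

theorem ncard_eq_ncard_setOf_pow_succ {φ : F →+* F} (hφ : ∀ x, φ x = x ^ q)
    (hc : c ^ q + c = 0) :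
    {p : F × F | p.1 ^ (q + 1) = p.2 ^ q + p.2 ∧ p.2 = a * p.1 ^ 2 + c}.ncard =
      {x : F | x ^ (q + 1) = a ^ q * (x ^ q) ^ 2 + a * x ^ 2}.ncard := by
  have htrace (x : F) :
      (a * x ^ 2 + c) ^ q + (a * x ^ 2 + c) = a ^ q * (x ^ q) ^ 2 + a * x ^ 2 := by
    rw [← hφ, map_add, map_mul, map_pow, hφ, hφ, hφ]
    linear_combination hc
  have hgraph : {p : F × F | p.1 ^ (q + 1) = p.2 ^ q + p.2 ∧ p.2 = a * p.1 ^ 2 + c} =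
      (fun x => (x, a * x ^ 2 + c)) '' {x : F | x ^ (q + 1) = a ^ q * (x ^ q) ^ 2 + a * x ^ 2} := by
    ext ⟨x, y⟩
    simp only [Set.mem_ofPred_eq, Set.mem_image, Prod.mk.injEq]
    constructor
    · rintro ⟨hx, rfl⟩
      exact ⟨x, htrace x ▸ hx, rfl, rfl⟩
    · rintro ⟨x, hx, rfl, rfl⟩
      exact ⟨(htrace x).symm ▸ hx, rfl⟩
  rw [hgraph, Set.ncard_image_of_injective _ fun x y h => congrArg Prod.fst h]

variable [NeZero (2 : F)] {w : F}

theorem setOf_pow_succ_eq_insert (hq : 1 ≤ q) (ha : a ≠ 0) (hw : w ^ 2 = 1 - 4 * a ^ (q + 1)) :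
    {x : F | x ^ (q + 1) = a ^ q * (x ^ q) ^ 2 + a * x ^ 2} =
      insert 0 {x | x ^ (q - 1) = (1 + w) / (2 * a ^ q) ∨
        x ^ (q - 1) = (1 - w) / (2 * a ^ q)} := by
  ext x
  simp only [Set.mem_ofPred_eq, Set.mem_insert_iff]
  rcases eq_or_ne x 0 with rfl | hx
  · simp [zero_pow (by omega : q ≠ 0)]
  set u := x ^ (q - 1)
  have hxq : x ^ q = u * x := by rw [← pow_succ, Nat.sub_add_cancel hq]
  have hquad : x ^ (q + 1) - (a ^ q * (x ^ q) ^ 2 + a * x ^ 2) =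
      -(a ^ q * (u * u) + (-1) * u + a) * x ^ 2 := by
    rw [pow_succ, hxq]; ring
  have hdisc : discrim (a ^ q) (-1) a = w * w := by
    rw [discrim, ← sq, hw]; ring
  rw [← sub_eq_zero, hquad, mul_eq_zero, neg_eq_zero, or_iff_left (pow_ne_zero 2 hx),
    quadratic_eq_zero_iff (pow_ne_zero q ha) hdisc, neg_neg,
    or_iff_right hx]

theorem one_sub_sq_ne_zero (ha : a ≠ 0) (hw : w ^ 2 = 1 - 4 * a ^ (q + 1)) : 1 - w ^ 2 ≠ 0 := by
  rw [show 1 - w ^ 2 = 2 * a ^ q * (2 * a) by rw [hw]; ring]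
  exact mul_ne_zero (mul_ne_zero two_ne_zero (pow_ne_zero _ ha)) (mul_ne_zero two_ne_zero ha)

theorem roots_ne_zero (ha : a ≠ 0) (hw : w ^ 2 = 1 - 4 * a ^ (q + 1)) :
    (1 + w) / (2 * a ^ q) ≠ 0 ∧ (1 - w) / (2 * a ^ q) ≠ 0 := by
  have hprod : (1 + w) * (1 - w) ≠ 0 := by
    convert one_sub_sq_ne_zero ha hw using 1
    ring
  have h2a : 2 * a ^ q ≠ 0 := mul_ne_zero two_ne_zero (pow_ne_zero _ ha)
  exact ⟨div_ne_zero (left_ne_zero_of_mul hprod) h2a,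
    div_ne_zero (right_ne_zero_of_mul hprod) h2a⟩

theorem root_pow_succ {φ : F →+* F} (hφ : ∀ x, φ x = x ^ q) (haq : (a ^ q) ^ q = a)
    (ha : a ≠ 0) (hw : w ^ 2 = 1 - 4 * a ^ (q + 1)) :
    ((1 + w) / (2 * a ^ q)) ^ (q + 1) = (1 + w ^ q) * (1 + w) / (1 - w ^ 2) := by
  have h4 : 1 - w ^ 2 = 2 * a * (2 * a ^ q) := by rw [hw]; ring
  rw [pow_succ, ← hφ, map_div₀, map_add, map_one, map_mul, map_ofNat, hφ, hφ, haq, h4]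
  field_simp

theorem root_pow_succ_eq_one {φ : F →+* F} (hφ : ∀ x, φ x = x ^ q) (haq : (a ^ q) ^ q = a)
    (ha : a ≠ 0) (hw : w ^ 2 = 1 - 4 * a ^ (q + 1)) (hwq : w ^ q = -w) :
    ((1 + w) / (2 * a ^ q)) ^ (q + 1) = 1 := by
  rw [root_pow_succ hφ haq ha hw, hwq, div_eq_one_iff_eq (one_sub_sq_ne_zero ha hw)]
  ring

theorem root_pow_succ_ne_one {φ : F →+* F} (hφ : ∀ x, φ x = x ^ q) (haq : (a ^ q) ^ q = a)
    (ha : a ≠ 0) (hw : w ^ 2 = 1 - 4 * a ^ (q + 1)) (hwq : w ^ q = w) (hw0 : w ≠ 0) :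
    ((1 + w) / (2 * a ^ q)) ^ (q + 1) ≠ 1 := by
  rw [root_pow_succ hφ haq ha hw, hwq, Ne, div_eq_one_iff_eq (one_sub_sq_ne_zero ha hw)]
  intro h
  have : 2 * w * (1 - w ^ 2) = 0 := by linear_combination (1 - w) * h
  simp [two_ne_zero, hw0, one_sub_sq_ne_zero ha hw] at this

theorem ncard_eq_one_add [Finite F] {φ : F →+* F}
    (hφ : ∀ x, φ x = x ^ q) (hq : 2 ≤ q) (ha : a ≠ 0) (hc : c ^ q + c = 0)
    (hw : w ^ 2 = 1 - 4 * a ^ (q + 1)) :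
    {p : F × F | p.1 ^ (q + 1) = p.2 ^ q + p.2 ∧ p.2 = a * p.1 ^ 2 + c}.ncard =
      1 + {x | x ^ (q - 1) = (1 + w) / (2 * a ^ q) ∨
        x ^ (q - 1) = (1 - w) / (2 * a ^ q)}.ncard := by
  obtain ⟨hroot₁, hroot₂⟩ := roots_ne_zero ha hw
  have h0 : (0 : F) ∉ {x | x ^ (q - 1) = (1 + w) / (2 * a ^ q) ∨
      x ^ (q - 1) = (1 - w) / (2 * a ^ q)} := by
    simp [zero_pow (by omega : q - 1 ≠ 0), hroot₁.symm, hroot₂.symm]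
  rw [ncard_eq_ncard_setOf_pow_succ hφ hc, setOf_pow_succ_eq_insert (by omega) ha hw,
    Set.ncard_insert_of_notMem h0, add_comm]

end HermitianParabola

namespace HermitianParabola

variable {F : Type*} [Field F] [Fintype F] [NeZero (2 : F)] {q : ℕ} {a w : F}
  {φ : F →+* F}

theorem ncard_preimage_roots_of_disc_eq_zero (hφ : ∀ x, φ x = x ^ q)
    (hF : Fintype.card F = q ^ 2) (ha : a ≠ 0) (hΔ : 1 - 4 * a ^ (q + 1) = 0) :
    {x : F | x ^ (q - 1) = (1 + 0) / (2 * a ^ q) ∨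
      x ^ (q - 1) = (1 - 0) / (2 * a ^ q)}.ncard = q - 1 := by
  have hF' := FiniteField.card_eq_of_card_eq_sq hF
  have hq : q ≠ 0 := by have := (FiniteField.ne_zero_and_ne_zero_of_card_eq hF').1; omega
  simp only [add_zero, sub_zero, or_self]
  refine FiniteField.ncard_pow_eq hF' ?_
  simpa using root_pow_succ_eq_one (w := 0) hφ (FiniteField.pow_pow_eq_self_of_card_eq_sq hF a) ha
    (by rw [hΔ]; simp) (by simp [hq])

theorem preimage_roots_eq_empty (hφ : ∀ x, φ x = x ^ q) (hF : Fintype.card F = q ^ 2)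
    (ha : a ≠ 0) (hw : w ^ 2 = 1 - 4 * a ^ (q + 1)) (hwq : w ^ q = w) (hw0 : w ≠ 0) :
    {x : F | x ^ (q - 1) = (1 + w) / (2 * a ^ q) ∨
      x ^ (q - 1) = (1 - w) / (2 * a ^ q)} = ∅ := by
  have hF' := FiniteField.card_eq_of_card_eq_sq hF
  have haq := FiniteField.pow_pow_eq_self_of_card_eq_sq hF a
  have hw' : (-w) ^ 2 = 1 - 4 * a ^ (q + 1) := by rw [neg_sq, hw]
  have hwq' : (-w) ^ q = -w := by rw [← hφ, map_neg, hφ, hwq]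
  obtain ⟨hroot₁, hroot₂⟩ := roots_ne_zero ha hw
  rw [sub_eq_add_neg] at hroot₂ ⊢
  refine Set.eq_empty_of_forall_notMem fun x hx => hx.elim ?_ ?_
  · exact FiniteField.pow_ne_of_pow_ne_one hF' hroot₁
      (root_pow_succ_ne_one hφ haq ha hw hwq hw0) x
  · exact FiniteField.pow_ne_of_pow_ne_one hF' hroot₂
      (root_pow_succ_ne_one hφ haq ha hw' hwq' (neg_ne_zero.mpr hw0)) x

theorem ncard_preimage_roots_of_pow_eq_neg (hφ : ∀ x, φ x = x ^ q)
    (hF : Fintype.card F = q ^ 2) (ha : a ≠ 0) (hw : w ^ 2 = 1 - 4 * a ^ (q + 1))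
    (hwq : w ^ q = -w) (hw0 : w ≠ 0) :
    {x : F | x ^ (q - 1) = (1 + w) / (2 * a ^ q) ∨
      x ^ (q - 1) = (1 - w) / (2 * a ^ q)}.ncard = 2 * (q - 1) := by
  have hF' := FiniteField.card_eq_of_card_eq_sq hF
  have haq := FiniteField.pow_pow_eq_self_of_card_eq_sq hF a
  have hw' : (-w) ^ 2 = 1 - 4 * a ^ (q + 1) := by rw [neg_sq, hw]
  have hwq' : (-w) ^ q = - -w := by rw [← hφ, map_neg, hφ, hwq]
  have hne : (1 + w) / (2 * a ^ q) ≠ (1 - w) / (2 * a ^ q) := by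
    rw [Ne, div_left_inj' (mul_ne_zero two_ne_zero (pow_ne_zero _ ha))]
    intro h
    have h2w : 2 * w = 0 := by linear_combination h
    exact hw0 ((mul_eq_zero.mp h2w).resolve_left two_ne_zero)
  rw [Set.ncard_setOf_or_of_ne hne, sub_eq_add_neg,
    FiniteField.ncard_pow_eq hF' (root_pow_succ_eq_one hφ haq ha hw hwq),
    FiniteField.ncard_pow_eq hF' (root_pow_succ_eq_one hφ haq ha hw' hwq'), two_mul]

end HermitianParabola

theorem stmt_8_general (q : ℕ) (hodd : Odd q) (F : Type*) [Field F] [Fintype F]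
    (hF : Fintype.card F = q ^ 2) (a c : F) (ha : a ≠ 0) (hc : c ^ q + c = 0)
    (Δ : F) (hΔ : Δ = 1 - 4 * a ^ (q + 1)) (I : ℕ)
    (hI : I = Set.ncard {p : F × F | p.1 ^ (q + 1) = p.2 ^ q + p.2 ∧
        p.2 = a * p.1 ^ 2 + c}) :
    (Δ = 0 → I = q) ∧
    (Δ ≠ 0 → (∃ z : F, z ^ q = z ∧ z ^ 2 = Δ) → I = 1) ∧
    ((¬ ∃ z : F, z ^ q = z ∧ z ^ 2 = Δ) → I = 2 * q - 1) := by
  obtain ⟨φ, hφ⟩ := FiniteField.exists_ringHom_eq_pow (hF ▸ dvd_pow_self q two_ne_zero)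
  have : NeZero (2 : F) :=
    ⟨Ring.two_ne_zero (FiniteField.ringChar_ne_two_of_card_eq_sq hF hodd)⟩
  have hq : 2 ≤ q := by
    have := (FiniteField.ne_zero_and_ne_zero_of_card_eq
      (FiniteField.card_eq_of_card_eq_sq hF)).1
    omega
  subst hΔ
  have hI_eq (w : F) (hw : w ^ 2 = 1 - 4 * a ^ (q + 1)) := hI ▸
    HermitianParabola.ncard_eq_one_add hφ hq ha hc hw
  refine ⟨fun hΔ0 => ?_, fun hΔ0 ⟨z, hzq, hz⟩ => ?_, fun hns => ?_⟩
  · rw [hI_eq 0 (by rw [hΔ0]; ring),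
      HermitianParabola.ncard_preimage_roots_of_disc_eq_zero hφ hF ha hΔ0]
    omega
  · have hz0 : z ≠ 0 := by rintro rfl; exact hΔ0 (by rw [← hz]; ring)
    rw [hI_eq z hz, HermitianParabola.preimage_roots_eq_empty hφ hF ha hz hzq hz0,
      Set.ncard_empty]
  · have hΔq := HermitianParabola.disc_pow_eq_self hφ
      (FiniteField.pow_pow_eq_self_of_card_eq_sq hF a)
    obtain ⟨w, hw, hwq, hw0⟩ := FiniteField.exists_sq_eq_pow_eq_neg hF hodd hΔq hns
    rw [hI_eq w hw, HermitianParabola.ncard_preimage_roots_of_pow_eq_neg hφ hF ha hw hwq hw0]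
    omega

theorem stmt_8 (q : ℕ) (hq : IsPrimePow q) (hodd : Odd q) (F : Type*) [Field F] [Fintype F]
    (hF : Fintype.card F = q ^ 2) (a c : F) (ha : a ≠ 0) (hc : c ^ q + c = 0)
    (Δ : F) (hΔ : Δ = 1 - 4 * a ^ (q + 1)) (I : ℕ)
    (hI : I = Set.ncard {p : F × F | p.1 ^ (q + 1) = p.2 ^ q + p.2 ∧
        p.2 = a * p.1 ^ 2 + c}) :
    (Δ = 0 → I = q) ∧
    (Δ ≠ 0 → (∃ z : F, z ^ q = z ∧ z ^ 2 = Δ) → I = 1) ∧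
    ((¬ ∃ z : F, z ^ q = z ∧ z ^ 2 = Δ) → I = 2 * q - 1) :=
  stmt_8_general q hodd F hF a c ha hc Δ hΔ I hI
end

section
/- Let q = 2^e with e ≥ 1 and let F be the finite field with q² elements. Let a, c ∈ F with a ≠ 0 and c^q + c ≠ 0, and let I be the cardinality of {(x,y) ∈ F×F : x^(q+1) = y^q + y and y = a·x² + c}. If there exists z ∈ F with z^q = z and z² + z = a^(q+1) (i.e. the absolute trace of a^(q+1) from F_q to F_2 is 0), then I = q + 1; otherwise I = q − 1. -/
/-!
In characteristic 2 the intersection condition reads `x ^ (q + 1) + Tr (a x²) = Tr c` with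
`Tr y = y ^ q + y`, which forces `x ≠ 0`. The substitution `u = a x ^ (1 - q)` turns it into
`x ^ (q + 1) (u ^ q + u + 1) = Tr c`, where `u` runs over the `q + 1` solutions of
`u ^ (q + 1) = a ^ (q + 1)`, and for each such `u` with `u ^ q + u ≠ 1` exactly one `x` lies on
both curves. Hence `I = q + 1 - #{u | u ^ (q + 1) = a ^ (q + 1), u ^ q + u = 1}`. These
exceptional `u` are the roots of `u ^ 2 + u = a ^ (q + 1)` outside `𝔽_q`: there are none when
`a ^ (q + 1) = z ^ 2 + z` with `z ∈ 𝔽_q`, and two otherwise, since every element of `𝔽_q` has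
the form `v ^ 2 + v` with `v ∈ 𝔽_{q²}`.
-/

open Finset Polynomial

theorem card_fiber_eq_of_card_eq_mul {α β : Type*} [DecidableEq β] {s : Finset α}
    {R : Finset β} {f : α → β} (hf : ∀ x ∈ s, f x ∈ R) {m n : ℕ}
    (hfib : ∀ r ∈ R, #{x ∈ s | f x = r} ≤ m) (hR : #R ≤ n) (hs : #s = m * n)
    {r : β} (hr : r ∈ R) : #{x ∈ s | f x = r} = m := by
  have hsum : ∑ r ∈ R, #{x ∈ s | f x = r} = ∑ _r ∈ R, m := by
    refine le_antisymm (sum_le_sum hfib) ?_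
    rw [sum_const, smul_eq_mul, ← card_eq_sum_card_fiberwise hf, hs, mul_comm]
    exact Nat.mul_le_mul_left m hR
  exact (sum_eq_sum_iff_of_le hfib).1 hsum r hr

theorem Set.ncard_graph_inter {α β : Type*} (P : α → β → Prop) (f : α → β) :
    {p : α × β | P p.1 p.2 ∧ p.2 = f p.1}.ncard = {x | P x (f x)}.ncard := by
  have hgraph : {p : α × β | P p.1 p.2 ∧ p.2 = f p.1} =
      (fun x => (x, f x)) '' {x | P x (f x)} := by
    ext ⟨x, y⟩
    simp only [Set.mem_ofPred_eq, Set.mem_image, Prod.mk.injEq]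
    constructor
    · rintro ⟨h, rfl⟩
      exact ⟨x, h, rfl, rfl⟩
    · rintro ⟨x, h, rfl, rfl⟩
      exact ⟨h, rfl⟩
  rw [hgraph, Set.ncard_image_of_injective _ fun x y h => congrArg Prod.fst h]

theorem sq_add_self_eq_sq_add_self_iff {R : Type*} [CommRing R] [IsDomain R] [CharP R 2]
    {v w : R} : v ^ 2 + v = w ^ 2 + w ↔ v = w ∨ v = w + 1 := by
  rw [← sub_eq_zero, show v ^ 2 + v - (w ^ 2 + w) = (v - w) * (v + (w + 1)) by ring,
    mul_eq_zero, sub_eq_zero, CharTwo.add_eq_zero]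

theorem pow_succ_eq_and_pow_add_self_eq_one_iff {R : Type*} [CommRing R] [CharP R 2]
    {q : ℕ} {b u : R} :
    u ^ (q + 1) = b ∧ u ^ q + u = 1 ↔ u ^ 2 + u = b ∧ u ^ q = u + 1 := by
  rw [CharTwo.add_eq_iff_eq_add, add_comm 1 u]
  constructor
  · rintro ⟨h, hq⟩
    exact ⟨by rw [← h, pow_succ u q, hq]; ring, hq⟩
  · rintro ⟨h, hq⟩
    exact ⟨by rw [← h, pow_succ u q, hq]; ring, hq⟩

theorem pow_succ_mul_mul_div_pow {F : Type*} [Field F] {q : ℕ} {a x : F} (hx : x ≠ 0) :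
    x ^ (q + 1) * (a * x / x ^ q) = a * x ^ 2 := by
  field_simp
  ring

section FiniteField

variable {F : Type*} [Field F] [Fintype F] {q : ℕ}

theorem one_lt_of_card_eq_sq (hF : Fintype.card F = q ^ 2) : 1 < q := by
  have := Fintype.one_lt_card (α := F)
  rw [hF] at this
  by_contra! h
  interval_cases q <;> simp at this

theorem pow_pow_eq_self_of_card_eq_sq (hF : Fintype.card F = q ^ 2) (x : F) :
    (x ^ q) ^ q = x := by
  rw [← pow_mul, ← sq, ← hF, FiniteField.pow_card]

theorem pow_succ_add_trace_eq_mul (hF : Fintype.card F = q ^ 2) {a x : F} (hx : x ≠ 0) :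
    x ^ (q + 1) + a ^ q * (x ^ 2) ^ q + a * x ^ 2 =
      x ^ (q + 1) * ((a * x / x ^ q) ^ q + a * x / x ^ q + 1) := by
  rw [mul_add, mul_add, pow_succ_mul_mul_div_pow hx, div_pow, mul_pow,
    pow_pow_eq_self_of_card_eq_sq hF]
  field_simp
  ring

theorem mul_div_pow_pow_succ (hF : Fintype.card F = q ^ 2) {a x : F} (hx : x ≠ 0) :
    (a * x / x ^ q) ^ (q + 1) = a ^ (q + 1) := by
  rw [pow_succ, div_pow, mul_pow, pow_pow_eq_self_of_card_eq_sq hF]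
  field_simp
  ring

variable [DecidableEq F]

theorem card_filter_pow_eq_le {n : ℕ} (hn : 0 < n) (t : F) :
    #{x : F | x ^ n = t} ≤ n :=
  calc #{x : F | x ^ n = t}
      ≤ #(nthRoots n t).toFinset :=
        card_le_card fun x hx => by simpa [mem_nthRoots hn] using hx
    _ ≤ Multiset.card (nthRoots n t) := Multiset.toFinset_card_le _
    _ ≤ n := card_nthRoots n t

theorem card_filter_pow_eq_self_le (hq : 1 < q) : #{z : F | z ^ q = z} ≤ q :=
  calc #{z : F | z ^ q = z}
      ≤ #(X ^ q - X : F[X]).roots.toFinset :=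
        card_le_card fun z hz => by
          simpa [mem_roots (FiniteField.X_pow_card_sub_X_ne_zero F hq), sub_eq_zero] using hz
    _ ≤ Multiset.card (X ^ q - X : F[X]).roots := Multiset.toFinset_card_le _
    _ ≤ q := (card_roots' _).trans (FiniteField.X_pow_card_sub_X_natDegree_eq F hq).le

theorem card_filter_pow_eq_of_mul_eq {m n : ℕ} (hmn : m * n = Fintype.card F - 1) {t : F}
    (ht : t ^ n = 1) : #{x : F | x ^ m = t} = m := by
  have hmn_pos : 0 < m * n := hmn ▸ Nat.sub_pos_of_lt Fintype.one_lt_card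
  have hm : 0 < m := Nat.pos_of_mul_pos_right hmn_pos
  have hn : 0 < n := Nat.pos_of_mul_pos_left hmn_pos
  have ht0 : t ≠ 0 := by
    rintro rfl
    exact zero_ne_one ((zero_pow hn.ne').symm.trans ht)
  have hfiber := card_fiber_eq_of_card_eq_mul (s := {x : F | x ≠ 0}) (R := {r : F | r ^ n = 1})
    (f := (· ^ m))
    (fun x hx => by
      rw [mem_filter] at hx ⊢
      rw [← pow_mul, hmn]
      exact ⟨mem_univ _, FiniteField.pow_card_sub_one_eq_one x hx.2⟩)
    (fun r _ => (card_le_card fun x hx => by simp_all).trans (card_filter_pow_eq_le hm r))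
    (card_filter_pow_eq_le hn 1)
    (by rw [filter_ne', card_erase_of_mem (mem_univ _), card_univ, hmn])
    (by simpa using ht)
  refine Eq.trans (congrArg card ?_) hfiber
  rw [filter_filter]
  refine filter_congr fun x _ => ⟨fun hx => ⟨?_, hx⟩, And.right⟩
  rintro rfl
  exact ht0 (hx ▸ zero_pow hm.ne')

end FiniteField

section CharTwo

variable {F : Type*} [Field F] [CharP F 2] {q e : ℕ}

theorem add_pow_of_eq_two_pow (hq : q = 2 ^ e) (x y : F) : (x + y) ^ q = x ^ q + y ^ q :=
  hq ▸ add_pow_char_pow x y 2 e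

theorem pow_succ_eq_trace_iff (hq : q = 2 ^ e) (a c x : F) :
    x ^ (q + 1) = (a * x ^ 2 + c) ^ q + (a * x ^ 2 + c) ↔
      x ^ (q + 1) + a ^ q * (x ^ 2) ^ q + a * x ^ 2 = c ^ q + c := by
  rw [add_pow_of_eq_two_pow hq, mul_pow]
  constructor <;> intro h
  · linear_combination h + (a ^ q * (x ^ 2) ^ q + a * x ^ 2) * CharTwo.two_eq_zero (R := F)
  · linear_combination h - (a ^ q * (x ^ 2) ^ q + a * x ^ 2) * CharTwo.two_eq_zero (R := F)

variable [Fintype F]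

theorem exists_mul_div_pow_eq (hq : q = 2 ^ e) (hF : Fintype.card F = q ^ 2) {a s u : F}
    (ha : a ≠ 0) (hs : s ^ q = s) (hs0 : s ≠ 0) (hu : u ^ (q + 1) = a ^ (q + 1))
    (hD : u ^ q + u + 1 ≠ 0) :
    ∃ x : F, x ≠ 0 ∧ a * x / x ^ q = u ∧ x ^ (q + 1) * (u ^ q + u + 1) = s := by
  have hu0 : u ≠ 0 := by
    rintro rfl
    exact pow_ne_zero _ ha (hu.symm.trans (zero_pow q.succ_ne_zero))
  have hDq : (u ^ q + u + 1) ^ q = u ^ q + u + 1 := by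
    rw [add_pow_of_eq_two_pow hq, add_pow_of_eq_two_pow hq, one_pow,
      pow_pow_eq_self_of_card_eq_sq hF, add_comm u]
  obtain ⟨t, htD⟩ : ∃ t, t * (u ^ q + u + 1) = s := ⟨s / _, div_mul_cancel₀ s hD⟩
  have ht0 : t ≠ 0 := by
    rintro rfl
    exact hs0 (htD.symm.trans (zero_mul _))
  have htq : t ^ q = t := by
    refine mul_right_cancel₀ hD ?_
    rw [← hDq, ← mul_pow, htD, hs, ← htD, hDq]
  -- `x` is forced: `x ^ (q + 1) = t` and `x ^ (q - 1) = a / u` give `x ^ 2 = t * u / a`.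
  obtain ⟨x, hx⟩ := FiniteField.isSquare_of_char_two (ringChar.eq F 2) (t * u / a)
  have hx0 : x ≠ 0 := by
    rintro rfl
    exact div_ne_zero (mul_ne_zero ht0 hu0) ha (hx.trans (zero_mul 0))
  have hxq : x ^ q = a * x / u := by
    refine CharTwo.sq_injective ?_
    calc (x ^ q) ^ 2 = (t * u / a) ^ q := by rw [pow_right_comm, sq, hx]
      _ = t * u ^ q / a ^ q := by rw [div_pow, mul_pow, htq]
      _ = a * t / u := by
        field_simp
        linear_combination hu
      _ = (a * x / u) ^ 2 := by
        rw [div_pow, mul_pow, sq x, ← hx]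
        field_simp
  refine ⟨x, hx0, by rw [hxq]; field_simp, ?_⟩
  rw [pow_succ, hxq, ← htD]
  calc a * x / u * x * (u ^ q + u + 1) = a * (x * x) / u * (u ^ q + u + 1) := by ring
    _ = t * (u ^ q + u + 1) := by
      rw [← hx]
      field_simp

variable [DecidableEq F]

theorem card_filter_pow_add_self_eq (hq : q = 2 ^ e) (hF : Fintype.card F = q ^ 2) {r : F}
    (hr : r ^ q = r) : #{y : F | y ^ q + y = r} = q := by
  have hq1 := one_lt_of_card_eq_sq hF
  have hfib : ∀ r : F, #{y : F | y ^ q + y = r} ≤ q := by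
    intro r
    obtain h | ⟨y₀, hy₀⟩ := ({y : F | y ^ q + y = r} : Finset F).eq_empty_or_nonempty
    · simp [h]
    refine (card_le_card_of_injOn (· + y₀) (fun y hy => ?_) (add_left_injective y₀).injOn).trans
      (card_filter_pow_eq_self_le hq1)
    rw [mem_filter] at hy₀
    simp only [coe_filter, mem_univ, true_and, Set.mem_ofPred_eq] at hy ⊢
    rw [add_pow_of_eq_two_pow hq]
    linear_combination hy - hy₀.2 + (y₀ ^ q - y) * CharTwo.two_eq_zero (R := F)
  exact card_fiber_eq_of_card_eq_mul (s := univ) (R := {z : F | z ^ q = z})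
    (fun y _ => by simp [add_pow_of_eq_two_pow hq, pow_pow_eq_self_of_card_eq_sq hF, add_comm])
    (fun r _ => hfib r) (card_filter_pow_eq_self_le hq1) (by rw [card_univ, hF, sq])
    (by simpa using hr)

theorem card_filter_sq_add_self_eq_le (r : F) : #{v : F | v ^ 2 + v = r} ≤ 2 := by
  obtain h | ⟨v₀, hv₀⟩ := ({v : F | v ^ 2 + v = r} : Finset F).eq_empty_or_nonempty
  · simp [h]
  rw [mem_filter] at hv₀
  calc #{v : F | v ^ 2 + v = r} ≤ #{v₀, v₀ + 1} := card_le_card fun v hv => by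
        rw [mem_filter, ← hv₀.2, sq_add_self_eq_sq_add_self_iff] at hv
        simpa using hv.2
    _ ≤ 2 := card_le_two

/-- The map `v ↦ v ^ 2 + v` is two-to-one from `{v | v ^ q + v ∈ {0, 1}}`, which has `2 q`
elements, into `𝔽_q`. -/
theorem exists_sq_add_self_eq_of_pow_eq_self (hq : q = 2 ^ e) (hF : Fintype.card F = q ^ 2)
    {b : F} (hb : b ^ q = b) : ∃ v : F, v ^ 2 + v = b ∧ (v ^ q = v ∨ v ^ q = v + 1) := by
  have hq1 := one_lt_of_card_eq_sq hF
  have hS : #{v : F | v ^ q + v = 0 ∨ v ^ q + v = 1} = 2 * q := by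
    rw [filter_or, card_union_of_disjoint (disjoint_filter.2 fun v _ h0 h1 => zero_ne_one
      (h0.symm.trans h1)), card_filter_pow_add_self_eq hq hF (zero_pow (by omega)),
      card_filter_pow_add_self_eq hq hF (one_pow q), two_mul]
  have hmaps : ∀ v ∈ ({v : F | v ^ q + v = 0 ∨ v ^ q + v = 1} : Finset F),
      v ^ 2 + v ∈ ({z : F | z ^ q = z} : Finset F) := by
    intro v hv
    simp only [mem_filter, mem_univ, true_and, CharTwo.add_eq_iff_eq_add, zero_add] at hv ⊢
    rw [add_pow_of_eq_two_pow hq, pow_right_comm]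
    rcases hv with hv | hv <;> rw [hv]
    linear_combination (1 + v) * CharTwo.two_eq_zero (R := F)
  have hfiber := card_fiber_eq_of_card_eq_mul hmaps
    (fun r _ => (card_le_card (filter_subset_filter _ (subset_univ _))).trans
      (card_filter_sq_add_self_eq_le r))
    (card_filter_pow_eq_self_le hq1) hS (by simpa using hb)
  obtain ⟨v, hv⟩ := card_pos.1 (hfiber ▸ two_pos)
  simp only [mem_filter, mem_univ, true_and] at hv
  refine ⟨v, hv.2, hv.1.imp (fun h => ?_) fun h => ?_⟩
  · linear_combination h - v * CharTwo.two_eq_zero (R := F)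
  · linear_combination h - v * CharTwo.two_eq_zero (R := F)

theorem card_filter_norm_trace_eq_one_of_exists (hq : q = 2 ^ e) {b : F}
    (h : ∃ z : F, z ^ q = z ∧ z ^ 2 + z = b) :
    #{u : F | u ^ (q + 1) = b ∧ u ^ q + u = 1} = 0 := by
  obtain ⟨z, hzq, rfl⟩ := h
  refine card_eq_zero.2 (filter_eq_empty_iff.2 fun u _ hu => ?_)
  rw [pow_succ_eq_and_pow_add_self_eq_one_iff, sq_add_self_eq_sq_add_self_iff] at hu
  obtain ⟨hzu, hu⟩ := hu
  have hfix : u ^ q = u := by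
    rcases hzu with rfl | rfl
    · exact hzq
    · rw [add_pow_of_eq_two_pow hq, one_pow, hzq]
  exact one_ne_zero (add_eq_left.1 (hu.symm.trans hfix))

theorem card_filter_norm_trace_eq_one_of_not_exists (hq : q = 2 ^ e)
    (hF : Fintype.card F = q ^ 2) {b : F} (hb : b ^ q = b)
    (h : ¬∃ z : F, z ^ q = z ∧ z ^ 2 + z = b) :
    #{u : F | u ^ (q + 1) = b ∧ u ^ q + u = 1} = 2 := by
  obtain ⟨v, hvb, hvq | hvq⟩ := exists_sq_add_self_eq_of_pow_eq_self hq hF hb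
  · exact absurd ⟨v, hvq, hvb⟩ h
  have hW : ({u : F | u ^ (q + 1) = b ∧ u ^ q + u = 1} : Finset F) = {v, v + 1} := by
    ext u
    simp only [mem_filter, mem_univ, true_and, mem_insert, mem_singleton,
      pow_succ_eq_and_pow_add_self_eq_one_iff, ← hvb, sq_add_self_eq_sq_add_self_iff]
    refine ⟨And.left, ?_⟩
    rintro (rfl | rfl)
    · exact ⟨Or.inl rfl, hvq⟩
    · exact ⟨Or.inr rfl, by rw [add_pow_of_eq_two_pow hq, one_pow, hvq]⟩
  rw [hW, card_pair (by simp)]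

theorem card_filter_pow_succ_add_trace_eq (hq : q = 2 ^ e) (hF : Fintype.card F = q ^ 2) {a s : F}
    (ha : a ≠ 0) (hs : s ^ q = s) (hs0 : s ≠ 0) :
    #{x : F | x ^ (q + 1) + a ^ q * (x ^ 2) ^ q + a * x ^ 2 = s} =
      #{u : F | u ^ (q + 1) = a ^ (q + 1) ∧ u ^ q + u ≠ 1} := by
  have hmem : ∀ x ∈ ({x : F | x ^ (q + 1) + a ^ q * (x ^ 2) ^ q + a * x ^ 2 = s} : Finset F),
      x ≠ 0 ∧ x ^ (q + 1) * ((a * x / x ^ q) ^ q + a * x / x ^ q + 1) = s := by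
    intro x hx
    rw [mem_filter] at hx
    have hx0 : x ≠ 0 := by
      rintro rfl
      have hq0 : q ≠ 0 := (zero_lt_one.trans (one_lt_of_card_eq_sq hF)).ne'
      exact hs0 (by simpa [hq0] using hx.2.symm)
    exact ⟨hx0, (pow_succ_add_trace_eq_mul hF hx0).symm.trans hx.2⟩
  refine card_bij (fun x _ => a * x / x ^ q) (fun x hx => ?_) (fun x₁ hx₁ x₂ hx₂ h => ?_)
    (fun u hu => ?_)
  · obtain ⟨hx0, hxs⟩ := hmem x hx
    simp only [mem_filter, mem_univ, true_and]
    refine ⟨mul_div_pow_pow_succ hF hx0, fun h => hs0 ?_⟩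
    rw [← hxs, CharTwo.add_eq_zero.2 h, mul_zero]
  · obtain ⟨hx₁0, hxs₁⟩ := hmem x₁ hx₁
    obtain ⟨hx₂0, hxs₂⟩ := hmem x₂ hx₂
    rw [h] at hxs₁
    have hnorm : x₁ ^ (q + 1) = x₂ ^ (q + 1) :=
      mul_right_cancel₀ (fun h0 => hs0 (by rw [← hxs₂, h0, mul_zero])) (hxs₁.trans hxs₂.symm)
    refine CharTwo.sq_injective (mul_left_cancel₀ ha ?_)
    rw [← pow_succ_mul_mul_div_pow hx₁0, ← pow_succ_mul_mul_div_pow hx₂0, hnorm, h]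
  · simp only [mem_filter, mem_univ, true_and] at hu
    obtain ⟨x, hx0, hxu, hxs⟩ :=
      exists_mul_div_pow_eq hq hF ha hs hs0 hu.1 (mt CharTwo.add_eq_zero.1 hu.2)
    refine ⟨x, ?_, hxu⟩
    rw [mem_filter, pow_succ_add_trace_eq_mul hF hx0, hxu]
    exact ⟨mem_univ x, hxs⟩

theorem ncard_hermitian_inter_add_card_eq (hq : q = 2 ^ e) (hF : Fintype.card F = q ^ 2)
    {a c : F} (ha : a ≠ 0) (hc : c ^ q + c ≠ 0) :
    {p : F × F | p.1 ^ (q + 1) = p.2 ^ q + p.2 ∧ p.2 = a * p.1 ^ 2 + c}.ncard +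
      #{u : F | u ^ (q + 1) = a ^ (q + 1) ∧ u ^ q + u = 1} = q + 1 := by
  have hmn : (q + 1) * (q - 1) = Fintype.card F - 1 := by
    rw [hF, ← Nat.sq_sub_sq, one_pow]
  rw [Set.ncard_graph_inter (fun x y : F => x ^ (q + 1) = y ^ q + y) (fun x => a * x ^ 2 + c)]
  have hcurve : {x : F | x ^ (q + 1) = (a * x ^ 2 + c) ^ q + (a * x ^ 2 + c)}.ncard =
      #{x : F | x ^ (q + 1) + a ^ q * (x ^ 2) ^ q + a * x ^ 2 = c ^ q + c} := by
    rw [← Set.ncard_coe_finset]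
    congr 1
    ext x
    simp [pow_succ_eq_trace_iff hq]
  have hcq : (c ^ q + c) ^ q = c ^ q + c := by
    rw [add_pow_of_eq_two_pow hq, pow_pow_eq_self_of_card_eq_sq hF, add_comm]
  have hnorm : (a ^ (q + 1)) ^ (q - 1) = 1 := by
    rw [← pow_mul, hmn, FiniteField.pow_card_sub_one_eq_one a ha]
  rw [hcurve, card_filter_pow_succ_add_trace_eq hq hF ha hcq hc, ← filter_filter, ← filter_filter,
    add_comm, card_filter_add_card_filter_not, card_filter_pow_eq_of_mul_eq hmn hnorm]

end CharTwo

theorem stmt_12_general (q : ℕ) (e : ℕ) (hqe : q = 2 ^ e)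
    (F : Type*) [Field F] [Fintype F]
    (hF : Fintype.card F = q ^ 2) (a c : F) (ha : a ≠ 0) (hc : c ^ q + c ≠ 0) (I : ℕ)
    (hI : I = Set.ncard {p : F × F | p.1 ^ (q + 1) = p.2 ^ q + p.2 ∧
        p.2 = a * p.1 ^ 2 + c}) :
    ((∃ z : F, z ^ q = z ∧ z ^ 2 + z = a ^ (q + 1)) → I = q + 1) ∧
    ((¬ ∃ z : F, z ^ q = z ∧ z ^ 2 + z = a ^ (q + 1)) → I = q - 1) := by
  classical
  have : CharP F 2 :=
    charP_of_card_eq_prime_pow (f := 2 * e) (by rw [hF, hqe, ← pow_mul, mul_comm])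
  have hcount := ncard_hermitian_inter_add_card_eq hqe hF ha hc
  rw [← hI] at hcount
  refine ⟨fun h => ?_, fun h => ?_⟩
  · rw [card_filter_norm_trace_eq_one_of_exists hqe h] at hcount
    omega
  · have hb : (a ^ (q + 1)) ^ q = a ^ (q + 1) := by
      rw [pow_right_comm, pow_succ, pow_pow_eq_self_of_card_eq_sq hF, ← pow_succ']
    rw [card_filter_norm_trace_eq_one_of_not_exists hqe hF hb h] at hcount
    omega

theorem stmt_12 (q : ℕ) (e : ℕ) (he : 1 ≤ e) (hqe : q = 2 ^ e)
    (F : Type*) [Field F] [Fintype F]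
    (hF : Fintype.card F = q ^ 2) (a c : F) (ha : a ≠ 0) (hc : c ^ q + c ≠ 0) (I : ℕ)
    (hI : I = Set.ncard {p : F × F | p.1 ^ (q + 1) = p.2 ^ q + p.2 ∧
        p.2 = a * p.1 ^ 2 + c}) :
    ((∃ z : F, z ^ q = z ∧ z ^ 2 + z = a ^ (q + 1)) → I = q + 1) ∧
    ((¬ ∃ z : F, z ^ q = z ∧ z ^ 2 + z = a ^ (q + 1)) → I = q - 1) :=
  stmt_12_general q e hqe F hF a c ha hc I hI
end
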